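/- arXiv:1803.11122 — 4 statements merged into one kernel-verified Lean document; each statement's English description precedes it below -/
import Mathlib

section
/- Let C be a cyclic group of order n generated by g acting on a finite set X. Define f(x) = Σ over orbits O of (1 + x^{n/|O|} + x^{2n/|O|} + ... + x^{(|O|-1)n/|O|}). Then for all 0 ≤ j < n, the number of fixed points of g^j on X equals f(ζ_n^j), where ζ_n = e^{2πi/n}. -/
open scoped Classical in
lemma fix_iff (n : ℕ) (hn : 0 < n) {G : Type*} [Group G] [Fintype G] (g : G)
    (hgen : ∀ h : G, h ∈ Subgroup.zpowers g)
    {X : Type*} [MulAction G X] (j : ℕ) (x : X) :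
    g ^ j • x = x ↔ Nat.card (MulAction.orbit G x) ∣ j := by
  have hcomm : ∀ a b : G, a * b = b * a := by
    intro a b
    obtain ⟨za, rfl⟩ := hgen a
    obtain ⟨zb, rfl⟩ := hgen b
    exact ((Commute.refl g).zpow_zpow za zb)
  haveI : (MulAction.stabilizer G x).Normal :=
    ⟨fun a ha b => by simpa [hcomm b a, mul_assoc] using ha⟩
  set Q := G ⧸ MulAction.stabilizer G x with hQ
  haveI : Fintype Q := Fintype.ofFinite Q
  have hgenQ : ∀ q : Q, q ∈ Subgroup.zpowers ((g : Q)) := by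
    intro q
    obtain ⟨h, rfl⟩ := QuotientGroup.mk_surjective q
    obtain ⟨z, rfl⟩ := hgen h
    exact ⟨z, by simp⟩
  have hd : Nat.card (MulAction.orbit G x) = orderOf ((g : Q)) := by
    rw [Nat.card_congr (MulAction.orbitEquivQuotientStabilizer G x),
      orderOf_eq_card_of_forall_mem_zpowers hgenQ, Nat.card_eq_fintype_card]
  rw [hd, orderOf_dvd_iff_pow_eq_one, ← QuotientGroup.mk_pow, QuotientGroup.eq_one_iff]
  exact MulAction.mem_stabilizer_iff.symm

lemma geom_lemma (n d j : ℕ) (hn : 0 < n) (hd : 0 < d) (hdvd : d ∣ n) :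
    ∑ k ∈ Finset.range d,
      (Complex.exp (2 * Real.pi * Complex.I / n)) ^ (j * (k * (n / d))) =
      if d ∣ j then (d : ℂ) else 0 := by
  have hζ : IsPrimitiveRoot (Complex.exp (2 * Real.pi * Complex.I / n)) n :=
    Complex.isPrimitiveRoot_exp n hn.ne'
  set ζ := Complex.exp (2 * Real.pi * Complex.I / n)
  have hprod : n = (n / d) * d := (Nat.div_mul_cancel hdvd).symm
  have hζd : IsPrimitiveRoot (ζ ^ (n / d)) d := hζ.pow hn hprod
  set z := (ζ ^ (n / d)) ^ j with hz
  have hterm : ∀ k, ζ ^ (j * (k * (n / d))) = z ^ k := by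
    intro k
    rw [hz, ← pow_mul, ← pow_mul]
    ring_nf
  simp_rw [hterm]
  have hz1 : z = 1 ↔ d ∣ j := hζd.pow_eq_one_iff_dvd j
  by_cases hdj : d ∣ j
  · simp [hz1.mpr hdj, hdj]
  · have hzne : z ≠ 1 := fun h => hdj (hz1.mp h)
    rw [geom_sum_eq hzne, if_neg hdj]
    have hzd : z ^ d = 1 := by
      rw [hz, ← pow_mul, mul_comm, pow_mul, hζd.pow_eq_one, one_pow]
    rw [hzd]
    simp

open scoped Classical in
/-- Cyclic sieving: the orbit-sum polynomial evaluated at ζ_n^j counts fixed points of g^j. -/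
theorem stmt0 (n : ℕ) (hn : 0 < n) (G : Type*) [Group G] [Fintype G]
    (g : G) (hgen : ∀ h : G, h ∈ Subgroup.zpowers g) (hcard : Fintype.card G = n)
    (X : Type*) [Fintype X] [MulAction G X] (j : ℕ) (hj : j < n) :
    (Fintype.card {x : X // g ^ j • x = x} : ℂ) =
      ∑ ω : MulAction.orbitRel.Quotient G X,
        ∑ k ∈ Finset.range (Nat.card ω.orbit),
          (Complex.exp (2 * Real.pi * Complex.I / n)) ^ (j * (k * (n / Nat.card ω.orbit))) := by
  have horbit : ∀ ω : MulAction.orbitRel.Quotient G X, ∀ y : ω.orbit,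
      MulAction.orbit G (y : X) = ω.orbit := by
    intro ω y
    have h := MulAction.orbitRel.Quotient.mem_orbit.mp y.2
    calc MulAction.orbit G (y : X)
        = MulAction.orbitRel.Quotient.orbit (Quotient.mk'' (y : X)) :=
          (MulAction.orbitRel.Quotient.orbit_mk (y : X)).symm
      _ = ω.orbit := by rw [h]
  have hdvd : ∀ ω : MulAction.orbitRel.Quotient G X, Nat.card ω.orbit ∣ n := by
    intro ω
    rw [MulAction.orbitRel.Quotient.orbit_eq_orbit_out ω Quotient.out_eq',
      Nat.card_congr (MulAction.orbitEquivQuotientStabilizer G ω.out)]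
    calc Nat.card (G ⧸ MulAction.stabilizer G ω.out) ∣ Nat.card G :=
        Subgroup.card_quotient_dvd_card _
      _ = n := by rw [Nat.card_eq_fintype_card, hcard]
  have hpos : ∀ ω : MulAction.orbitRel.Quotient G X, 0 < Nat.card ω.orbit := by
    intro ω
    haveI : Nonempty ω.orbit := (MulAction.orbitRel.Quotient.nonempty_orbit ω).to_subtype
    exact Nat.card_pos
  calc (Fintype.card {x : X // g ^ j • x = x} : ℂ)
      = ∑ x : X, if g ^ j • x = x then (1 : ℂ) else 0 := by
        rw [Fintype.card_subtype, Finset.card_filter, Nat.cast_sum]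
        exact Finset.sum_congr rfl fun x _ => by split_ifs <;> simp
    _ = ∑ x : X, if Nat.card (MulAction.orbit G x) ∣ j then (1 : ℂ) else 0 := by
        exact Finset.sum_congr rfl fun x _ => if_congr (fix_iff n hn g hgen j x) rfl rfl
    _ = ∑ s : Σ ω : MulAction.orbitRel.Quotient G X, ω.orbit,
          (if Nat.card (MulAction.orbit G (s.2 : X)) ∣ j then (1 : ℂ) else 0) := by
        rw [← Equiv.sum_comp (MulAction.selfEquivSigmaOrbits' G X).symm
          (fun x => if Nat.card (MulAction.orbit G x) ∣ j then (1 : ℂ) else 0)]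
        rfl
    _ = ∑ ω : MulAction.orbitRel.Quotient G X, ∑ y : ω.orbit,
          (if Nat.card (MulAction.orbit G (y : X)) ∣ j then (1 : ℂ) else 0) := by
        rw [← Finset.univ_sigma_univ, Finset.sum_sigma]
    _ = ∑ ω : MulAction.orbitRel.Quotient G X,
          (if Nat.card ω.orbit ∣ j then (Nat.card ω.orbit : ℂ) else 0) := by
        refine Finset.sum_congr rfl fun ω _ => ?_
        simp_rw [horbit ω]
        rw [Finset.sum_const, Finset.card_univ, ← Nat.card_eq_fintype_card]
        by_cases h : Nat.card ω.orbit ∣ j <;> simp [h]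
    _ = _ := by
        refine Finset.sum_congr rfl fun ω _ => ?_
        rw [geom_lemma n (Nat.card ω.orbit) j hn (hpos ω) (hdvd ω)]
end

section
/- Let H be a subgroup of Z_{n_1} ⊕ ... ⊕ Z_{n_m}. Call a nonzero element g ∈ H minimal if it is not a positive integer multiple (≥ 2) of any other element of H, where coordinates are represented by nonnegative integers a_i < n_i. Then every nonzero element of H is an integer multiple of exactly one minimal element of H. -/
/-- `g` is a multiple of `h`: there is a positive integer `k` with `g = k·h`, the equation
holding coordinatewise over ℤ via the canonical representatives `0 ≤ a_i < n_i`. -/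
def IsMultipleOf {m : ℕ} {n : Fin m → ℕ} (g h : ∀ i, ZMod (n i)) : Prop :=
  ∃ k : ℕ, 1 ≤ k ∧ ∀ i, (g i).val = k * (h i).val

/-- A nonzero element of `H` is minimal if it is not a proper positive-integer multiple of
any other element of `H`. -/
def IsMinimalIn {m : ℕ} {n : Fin m → ℕ} (H : AddSubgroup (∀ i, ZMod (n i)))
    (g : ∀ i, ZMod (n i)) : Prop :=
  g ∈ H ∧ g ≠ 0 ∧ ∀ h ∈ H, IsMultipleOf g h → h = g

/-- Key coprimality lemma: if `h₁` is minimal in `H`, `h₂ ∈ H`, `a,b` are coprime positive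
integers with `a · h₁ = b · h₂` coordinatewise on values, then `b = 1`. -/
lemma key_lemma {m : ℕ} {n : Fin m → ℕ} (hn : ∀ i, 0 < n i)
    (H : AddSubgroup (∀ i, ZMod (n i))) {h1 h2 : ∀ i, ZMod (n i)}
    (hm1 : IsMinimalIn H h1) (hm2 : h2 ∈ H)
    {a b : ℕ} (hab : Nat.Coprime a b) (ha : 1 ≤ a) (hb : 1 ≤ b)
    (hval : ∀ i, a * (h1 i).val = b * (h2 i).val) : b = 1 := by
  haveI : ∀ i, NeZero (n i) := fun i => ⟨(hn i).ne'⟩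
  obtain ⟨h1H, h10, h1min⟩ := hm1
  -- b divides each (h1 i).val
  have hdvd : ∀ i, b ∣ (h1 i).val := by
    intro i
    have : b ∣ a * (h1 i).val := ⟨(h2 i).val, hval i⟩
    exact (Nat.Coprime.dvd_of_dvd_mul_left (Nat.Coprime.symm hab) this)
  -- define w with values (h1 i).val / b
  set w : ∀ i, ZMod (n i) := fun i => (((h1 i).val / b : ℕ) : ZMod (n i)) with hw
  have hwval : ∀ i, (w i).val = (h1 i).val / b := by
    intro i
    apply ZMod.val_cast_of_lt
    exact lt_of_le_of_lt (Nat.div_le_self _ _) (ZMod.val_lt (h1 i))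
  have hbw : ∀ i, b * (w i).val = (h1 i).val := by
    intro i; rw [hwval i]; exact Nat.mul_div_cancel' (hdvd i)
  have haw : ∀ i, a * (w i).val = (h2 i).val := by
    intro i
    have : b * (a * (w i).val) = b * (h2 i).val := by
      rw [← hval i, ← hbw i]; ring
    exact Nat.eq_of_mul_eq_mul_left hb this
  -- w, scaled by b (resp. a) in ZMod, gives h1 (resp. h2)
  have hsmul_b : (b : ℕ) • w = h1 := by
    funext i
    have : ((b * (w i).val : ℕ) : ZMod (n i)) = (((h1 i).val : ℕ) : ZMod (n i)) := by
      rw [hbw i]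
    simpa [nsmul_eq_mul, Nat.cast_mul, ZMod.natCast_val, ZMod.cast_id] using this
  have hsmul_a : (a : ℕ) • w = h2 := by
    funext i
    have : ((a * (w i).val : ℕ) : ZMod (n i)) = (((h2 i).val : ℕ) : ZMod (n i)) := by
      rw [haw i]
    simpa [nsmul_eq_mul, Nat.cast_mul, ZMod.natCast_val, ZMod.cast_id] using this
  -- Bezout: w ∈ H
  have hwH : w ∈ H := by
    have hbez : (a : ℤ) * Nat.gcdA a b + (b : ℤ) * Nat.gcdB a b = 1 := by
      have := Nat.gcd_eq_gcd_ab a b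
      rw [hab] at this
      push_cast at this ⊢
      linarith
    have hcomb : (Nat.gcdA a b) • h2 + (Nat.gcdB a b) • h1
        = ((Nat.gcdA a b) * (a : ℤ) + (Nat.gcdB a b) * (b : ℤ)) • w := by
      rw [← hsmul_a, ← hsmul_b, ← natCast_zsmul w a, ← natCast_zsmul w b,
        ← mul_smul, ← mul_smul, add_smul]
    have hone : (Nat.gcdA a b) * (a : ℤ) + (Nat.gcdB a b) * (b : ℤ) = 1 := by linarith
    rw [hone, one_smul] at hcomb
    rw [← hcomb]
    exact H.add_mem (H.zsmul_mem hm2 _) (H.zsmul_mem h1H _)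
  -- minimality forces w = h1
  have hweq : w = h1 := h1min w hwH ⟨b, hb, fun i => (hbw i).symm⟩
  -- then b = 1 since h1 ≠ 0
  obtain ⟨i, hi⟩ : ∃ i, h1 i ≠ 0 := by
    by_contra hc
    push_neg at hc
    exact h10 (funext hc)
  have hival : (h1 i).val ≠ 0 := fun h => hi ((ZMod.val_eq_zero _).mp h)
  have : b * (h1 i).val = (h1 i).val := by
    have h' := hbw i
    rw [hweq] at h'
    exact h' 
  nlinarith [Nat.pos_of_ne_zero hival, this]

/-- Every nonzero element of a subgroup `H ≤ Z_{n_1} ⊕ ⋯ ⊕ Z_{n_m}` is a positive-integer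
multiple of exactly one minimal element of `H`. -/
theorem stmt2 {m : ℕ} (n : Fin m → ℕ) (hn : ∀ i, 0 < n i)
    (H : AddSubgroup (∀ i, ZMod (n i))) (g : ∀ i, ZMod (n i)) (hg : g ∈ H) (hg0 : g ≠ 0) :
    ∃! h : ∀ i, ZMod (n i), IsMinimalIn H h ∧ IsMultipleOf g h := by
  classical
  haveI : ∀ i, NeZero (n i) := fun i => ⟨(hn i).ne'⟩
  obtain ⟨i0, hi0⟩ : ∃ i, g i ≠ 0 := by
    by_contra hc; push_neg at hc; exact hg0 (funext hc)
  have hgv : 1 ≤ (g i0).val := Nat.pos_of_ne_zero (fun h => hi0 ((ZMod.val_eq_zero _).mp h))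
  set P : ℕ → Prop := fun k => ∃ h ∈ H, ∀ i, (g i).val = k * (h i).val with hP
  have hP1 : P 1 := ⟨g, hg, fun i => (one_mul _).symm⟩
  -- any k with P k satisfies k ≤ (g i0).val (and k ≥ 1)
  have hbound : ∀ k, P k → k ≤ (g i0).val := by
    rintro k ⟨h, -, hk⟩
    have h0 : (h i0).val ≠ 0 := by
      intro hz
      apply hi0
      have := hk i0
      rw [hz, mul_zero] at this
      exact (ZMod.val_eq_zero _).mp this
    calc k = k * 1 := (mul_one k).symm
      _ ≤ k * (h i0).val := Nat.mul_le_mul_left k (Nat.pos_of_ne_zero h0)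
      _ = (g i0).val := (hk i0).symm
  set K := Nat.findGreatest P (g i0).val with hK
  have hPK : P K := Nat.findGreatest_spec hgv hP1
  have hK1 : 1 ≤ K := Nat.le_findGreatest hgv hP1
  have hKmax : ∀ k, P k → k ≤ K := by
    intro k hk
    by_contra hc
    push_neg at hc
    exact Nat.findGreatest_is_greatest hc (hbound k hk) hk
  obtain ⟨h, hH, hval⟩ := hPK
  have hh0 : h ≠ 0 := by
    intro hz
    apply hg0
    funext i
    have := hval i
    rw [hz] at this
    simp at this
    exact this
  have hmin : IsMinimalIn H h := by
    refine ⟨hH, hh0, ?_⟩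
    rintro h' hH' ⟨k', hk'1, hk'⟩
    have hPkk : P (K * k') := ⟨h', hH', fun i => by rw [hval i, hk' i, mul_assoc]⟩
    have := hKmax _ hPkk
    have hk'eq : k' = 1 := by nlinarith
    funext i
    apply ZMod.val_injective
    have := hk' i
    rw [hk'eq, one_mul] at this
    exact this.symm
  refine ⟨h, ⟨hmin, K, hK1, hval⟩, ?_⟩
  -- uniqueness
  rintro h2 ⟨hm2, k2, hk21, hval2⟩
  have hm2' := hm2
  obtain ⟨h2H, h20, -⟩ := hm2'
  -- g val = K * h val = k2 * h2 val
  set d := Nat.gcd k2 K with hd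
  have hd0 : 0 < d := Nat.gcd_pos_of_pos_left _ (lt_of_lt_of_le Nat.zero_lt_one hk21)
  set a := k2 / d with ha
  set b := K / d with hb
  have hcop : Nat.Coprime a b := Nat.coprime_div_gcd_div_gcd hd0
  have ha1 : 1 ≤ a := Nat.div_pos (Nat.le_of_dvd (lt_of_lt_of_le Nat.zero_lt_one hk21) (Nat.gcd_dvd_left _ _)) hd0
  have hb1 : 1 ≤ b := Nat.div_pos (Nat.le_of_dvd (lt_of_lt_of_le Nat.zero_lt_one hK1) (Nat.gcd_dvd_right _ _)) hd0
  have hk2eq : k2 = d * a := (Nat.div_mul_cancel (Nat.gcd_dvd_left k2 K)).symm.trans (Nat.mul_comm _ _)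
  have hKeq : K = d * b := (Nat.div_mul_cancel (Nat.gcd_dvd_right k2 K)).symm.trans (Nat.mul_comm _ _)
  have hab : ∀ i, a * (h2 i).val = b * (h i).val := by
    intro i
    apply Nat.eq_of_mul_eq_mul_left hd0
    have := (hval2 i).symm.trans (hval i)
    rw [hk2eq, hKeq] at this
    rw [← mul_assoc, ← mul_assoc]
    exact this
  have hbone : b = 1 := key_lemma hn H hm2 hH hcop ha1 hb1 hab
  have haone : a = 1 := key_lemma hn H hmin h2H hcop.symm hb1 ha1 (fun i => (hab i).symm)
  funext i
  apply ZMod.val_injective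
  have := hab i
  rw [hbone, haone, one_mul, one_mul] at this
  exact this
end

section
/- Let p be a prime, n_1 = p^{t_1}, n_2 = p^{t_2}, a_1 = p^{r_1}, a_2 = p^{r_2} with 0 ≤ r_i < t_i and t_2 - r_2 ≥ t_1 - r_1. For integers y_1, y_2, the condition that (y_1, y_2) is a multiple of (a_1, a_2) in Z_{n_1} ⊕ Z_{n_2} (i.e., ∃ c: y_1 ≡ c a_1 mod n_1 and y_2 ≡ c a_2 mod n_2) is equivalent to: p^{r_1} | y_1 and y_1 p^{r_2} ≡ y_2 p^{r_1} (mod p^{r_2 + t_1}). -/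
/-- `(y_1, y_2)` is a multiple of `(p^{r_1}, p^{r_2})` in `Z_{p^{t_1}} ⊕ Z_{p^{t_2}}` iff
`p^{r_1} ∣ y_1` and `y_1 p^{r_2} ≡ y_2 p^{r_1} (mod p^{r_2 + t_1})`. -/
theorem stmt10 (p : ℕ) (hp : p.Prime) (t₁ t₂ r₁ r₂ : ℕ)
    (h₁ : r₁ < t₁) (h₂ : r₂ < t₂) (h : t₁ - r₁ ≤ t₂ - r₂) (y₁ y₂ : ℤ) :
    (∃ c : ℤ, y₁ ≡ c * (p : ℤ) ^ r₁ [ZMOD (p : ℤ) ^ t₁] ∧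
        y₂ ≡ c * (p : ℤ) ^ r₂ [ZMOD (p : ℤ) ^ t₂]) ↔
      ((p : ℤ) ^ r₁ ∣ y₁ ∧
        y₁ * (p : ℤ) ^ r₂ ≡ y₂ * (p : ℤ) ^ r₁ [ZMOD (p : ℤ) ^ (r₂ + t₁)]) := by
  have hp0 : (p : ℤ) ≠ 0 := by exact_mod_cast hp.pos.ne'
  have hkey : t₁ + r₂ ≤ t₂ + r₁ := by omega
  constructor
  · rintro ⟨c, hc1, hc2⟩
    have hd1 : (p : ℤ) ^ t₁ ∣ c * (p : ℤ) ^ r₁ - y₁ := Int.ModEq.dvd hc1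
    have hd2 : (p : ℤ) ^ t₂ ∣ c * (p : ℤ) ^ r₂ - y₂ := Int.ModEq.dvd hc2
    constructor
    · have h3 : (p : ℤ) ^ r₁ ∣ c * (p : ℤ) ^ r₁ - y₁ :=
        (pow_dvd_pow _ h₁.le).trans hd1
      have h4 : (p : ℤ) ^ r₁ ∣ c * (p : ℤ) ^ r₁ := dvd_mul_left _ _
      have := dvd_sub h4 h3
      simpa using this
    · rw [Int.modEq_iff_dvd]
      have e1 : (p : ℤ) ^ (t₁ + r₂) ∣ (c * (p : ℤ) ^ r₁ - y₁) * (p : ℤ) ^ r₂ := by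
        rw [pow_add]; exact mul_dvd_mul hd1 dvd_rfl
      have e2 : (p : ℤ) ^ (t₂ + r₁) ∣ (c * (p : ℤ) ^ r₂ - y₂) * (p : ℤ) ^ r₁ := by
        rw [pow_add]; exact mul_dvd_mul hd2 dvd_rfl
      have e2' : (p : ℤ) ^ (t₁ + r₂) ∣ (c * (p : ℤ) ^ r₂ - y₂) * (p : ℤ) ^ r₁ :=
        (pow_dvd_pow _ hkey).trans e2
      have := dvd_sub e1 e2'
      have heq : (c * (p : ℤ) ^ r₁ - y₁) * (p : ℤ) ^ r₂ -
          (c * (p : ℤ) ^ r₂ - y₂) * (p : ℤ) ^ r₁ =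
          y₂ * (p : ℤ) ^ r₁ - y₁ * (p : ℤ) ^ r₂ := by ring
      rw [heq] at this
      have hpow : (p : ℤ) ^ (r₂ + t₁) = (p : ℤ) ^ (t₁ + r₂) := by ring_nf
      rw [hpow]
      exact this
  · rintro ⟨⟨m, hm⟩, hmod⟩
    rw [Int.modEq_iff_dvd] at hmod
    -- hmod : p^(r₂+t₁) ∣ y₂ * p^r₁ - y₁ * p^r₂
    have hy2 : (p : ℤ) ^ r₂ ∣ y₂ := by
      have h5 : (p : ℤ) ^ (r₁ + r₂) ∣ y₂ * (p : ℤ) ^ r₁ := by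
        have h6 : (p : ℤ) ^ (r₁ + r₂) ∣ y₂ * (p : ℤ) ^ r₁ - y₁ * (p : ℤ) ^ r₂ :=
          (pow_dvd_pow _ (by omega)).trans hmod
        have h7 : (p : ℤ) ^ (r₁ + r₂) ∣ y₁ * (p : ℤ) ^ r₂ := by
          rw [hm, pow_add]
          exact ⟨m, by ring⟩
        have := dvd_add h6 h7
        simpa using this
      have h8 : (p : ℤ) ^ r₂ * (p : ℤ) ^ r₁ ∣ y₂ * (p : ℤ) ^ r₁ := by
        rwa [← pow_add, Nat.add_comm r₂ r₁]
      exact (mul_dvd_mul_iff_right (pow_ne_zero r₁ hp0)).mp h8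
    obtain ⟨k, hk⟩ := hy2
    refine ⟨k, ?_, ?_⟩
    · rw [Int.modEq_iff_dvd]
      have h9 : (p : ℤ) ^ (r₂ + t₁) ∣ ((p:ℤ)^r₂ * k * (p:ℤ)^r₁ - (p:ℤ)^r₁ * m * (p:ℤ)^r₂) := by
        rw [← hk, ← hm]; exact hmod
      have h10 : (p:ℤ)^r₂ * k * (p:ℤ)^r₁ - (p:ℤ)^r₁ * m * (p:ℤ)^r₂
          = ((p:ℤ)^(r₁+r₂)) * (k - m) := by rw [pow_add]; ring
      rw [h10] at h9
      have h11 : (p : ℤ) ^ (t₁ - r₁) ∣ k - m := by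
        have h12 : (p:ℤ)^(r₁+r₂) * (p:ℤ)^(t₁-r₁) ∣ (p:ℤ)^(r₁+r₂) * (k - m) := by
          rw [← pow_add]
          have : r₁ + r₂ + (t₁ - r₁) = r₂ + t₁ := by omega
          rw [this]; exact h9
        exact (mul_dvd_mul_iff_left (pow_ne_zero _ hp0)).mp h12
      have h13 : (p : ℤ) ^ t₁ ∣ (p:ℤ)^r₁ * (k - m) := by
        have : (p:ℤ)^t₁ = (p:ℤ)^r₁ * (p:ℤ)^(t₁-r₁) := by
          rw [← pow_add]; congr 1; omega
        rw [this]; exact mul_dvd_mul_left _ h11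
      have heq : k * (p:ℤ)^r₁ - y₁ = (p:ℤ)^r₁ * (k - m) := by rw [hm]; ring
      rw [heq]; exact h13
    · rw [hk, mul_comm]
end

section
/- Let p be a prime, n_i = p^{t_i} for i = 1,2, and let g = (p^{r_1}, p^{r_2}) generate the stabilizer G'_x ≤ Z_{n_1} ⊕ Z_{n_2}, with t_2 - r_2 ≥ t_1 - r_1. Set q = x_1^{p^{t_1-r_1}} and s = x_1^{p^{t_1-r_1}-1} x_2^{p^{(t_2-r_2)-(t_1-r_1)}}, and f(x_1,x_2) = (1 + q + ... + q^{p^{r_1}-1})(1 + s + ... + s^{p^{t_1-r_1+r_2}-1}). Then for every (y_1,y_2) ∈ Z_{n_1} ⊕ Z_{n_2}, f(ζ_{n_1}^{y_1}, ζ_{n_2}^{y_2}) equals p^{t_1+r_2} if (y_1,y_2) ∈ ⟨g⟩ and 0 otherwise. -/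
private lemma geom_sum_root {z : ℂ} {n : ℕ} (hz : z ^ n = 1) :
    ∑ k ∈ Finset.range n, z ^ k = if z = 1 then (n : ℂ) else 0 := by
  split_ifs with h
  · simp [h]
  · rw [geom_sum_eq h, hz, sub_self, zero_div]

open scoped Classical in
/-- The two-coordinate sieving polynomial: with `q = x_1^{p^{t_1-r_1}}` and
`s = x_1^{p^{t_1-r_1}-1} x_2^{p^{(t_2-r_2)-(t_1-r_1)}}` evaluated at
`x_i = ζ_{p^{t_i}}^{y_i}`, the product of geometric sums equals `p^{t_1+r_2}` if
`(y_1, y_2)` lies in the subgroup generated by `(p^{r_1}, p^{r_2})`, and `0` otherwise. -/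
theorem stmt11 (p : ℕ) (hp : p.Prime) (t₁ t₂ r₁ r₂ : ℕ)
    (h₁ : r₁ < t₁) (h₂ : r₂ < t₂) (h : t₁ - r₁ ≤ t₂ - r₂) (y₁ y₂ : ℕ) :
    (let x₁ : ℂ := Complex.exp (2 * Real.pi * Complex.I / (p ^ t₁)) ^ y₁
     let x₂ : ℂ := Complex.exp (2 * Real.pi * Complex.I / (p ^ t₂)) ^ y₂
     let q : ℂ := x₁ ^ (p ^ (t₁ - r₁))
     let s : ℂ := x₁ ^ (p ^ (t₁ - r₁) - 1) * x₂ ^ (p ^ ((t₂ - r₂) - (t₁ - r₁)))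
     (∑ k ∈ Finset.range (p ^ r₁), q ^ k) * (∑ k ∈ Finset.range (p ^ (t₁ - r₁ + r₂)), s ^ k)) =
      if ((y₁ : ZMod (p ^ t₁)), (y₂ : ZMod (p ^ t₂))) ∈
          AddSubgroup.zmultiples (((p : ZMod (p ^ t₁)) ^ r₁, (p : ZMod (p ^ t₂)) ^ r₂))
        then ((p : ℂ) ^ (t₁ + r₂)) else 0 := by
  have hp0 : p ≠ 0 := hp.pos.ne'
  have hppos : 0 < p := hp.pos
  -- substitute t₁ = r₁ + e₁, t₂ = r₂ + (e₁ + d)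
  obtain ⟨e₁, rfl⟩ : ∃ e, t₁ = r₁ + e := ⟨t₁ - r₁, by omega⟩
  simp only [show r₁ + e₁ - r₁ = e₁ from by omega] at h ⊢
  obtain ⟨c, rfl⟩ : ∃ c, t₂ = r₂ + c := ⟨t₂ - r₂, by omega⟩
  simp only [show r₂ + c - r₂ = c from by omega] at h ⊢
  obtain ⟨d, rfl⟩ : ∃ d, c = e₁ + d := ⟨c - e₁, by omega⟩
  simp only [show e₁ + d - e₁ = d from by omega] at h ⊢
  have hpe1 : 1 ≤ p ^ e₁ := Nat.one_le_pow _ _ hppos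
  -- the big primitive root
  set N := (r₁ + e₁) + (r₂ + (e₁ + d)) with hN
  have hNne : p ^ N ≠ 0 := pow_ne_zero _ hp0
  have hζ' := Complex.isPrimitiveRoot_exp (p ^ N) hNne
  set ζ : ℂ := Complex.exp (2 * Real.pi * Complex.I / ((p : ℂ) ^ N)) with hζdef
  have hζ : IsPrimitiveRoot ζ (p ^ N) := by
    convert hζ' using 3
    push_cast
    ring
  have hone : ∀ m : ℕ, ζ ^ m = 1 ↔ p ^ N ∣ m := fun m => hζ.pow_eq_one_iff_dvd m
  have hpC : ((p : ℂ)) ≠ 0 := Nat.cast_ne_zero.mpr hp0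
  have hx1 : Complex.exp (2 * Real.pi * Complex.I / ((p:ℂ) ^ (r₁ + e₁))) =
      ζ ^ (p ^ (r₂ + (e₁ + d))) := by
    rw [hζdef, ← Complex.exp_nat_mul]
    congr 1
    have hne1 : ((p:ℂ)) ^ (r₁ + e₁) ≠ 0 := pow_ne_zero _ hpC
    have hne2 : ((p:ℂ)) ^ N ≠ 0 := pow_ne_zero _ hpC
    field_simp
    rw [hN]
    push_cast
    ring
  have hx2 : Complex.exp (2 * Real.pi * Complex.I / ((p:ℂ) ^ (r₂ + (e₁ + d)))) =
      ζ ^ (p ^ (r₁ + e₁)) := by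
    rw [hζdef, ← Complex.exp_nat_mul]
    congr 1
    have hne1 : ((p:ℂ)) ^ (r₂ + (e₁ + d)) ≠ 0 := pow_ne_zero _ hpC
    have hne2 : ((p:ℂ)) ^ N ≠ 0 := pow_ne_zero _ hpC
    field_simp
    rw [hN]
    push_cast
    ring
  -- unfold the lets and pass to powers of ζ
  show (∑ k ∈ Finset.range (p ^ r₁),
      ((Complex.exp (2 * Real.pi * Complex.I / ((p:ℂ) ^ (r₁ + e₁))) ^ y₁) ^ (p ^ e₁)) ^ k) *
    (∑ k ∈ Finset.range (p ^ (e₁ + r₂)),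
      ((Complex.exp (2 * Real.pi * Complex.I / ((p:ℂ) ^ (r₁ + e₁))) ^ y₁) ^ (p ^ e₁ - 1) *
       (Complex.exp (2 * Real.pi * Complex.I / ((p:ℂ) ^ (r₂ + (e₁ + d)))) ^ y₂) ^ (p ^ d)) ^ k) = _
  rw [hx1, hx2]
  simp only [← pow_mul, ← pow_add]
  set Q : ℕ := p ^ (r₂ + (e₁ + d)) * y₁ * p ^ e₁ with hQdef
  set E : ℕ := p ^ (r₂ + (e₁ + d)) * y₁ * (p ^ e₁ - 1) + p ^ (r₁ + e₁) * y₂ * p ^ d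
    with hEdef
  simp only [pow_mul]
  -- membership characterization
  have hmem : (((y₁ : ZMod (p ^ (r₁ + e₁))), (y₂ : ZMod (p ^ (r₂ + (e₁ + d))))) ∈
      AddSubgroup.zmultiples
        (((p : ZMod (p ^ (r₁ + e₁))) ^ r₁, (p : ZMod (p ^ (r₂ + (e₁ + d)))) ^ r₂)))
      ↔ ∃ k : ℤ, ((p:ℤ) ^ (r₁ + e₁) ∣ (y₁:ℤ) - k * (p:ℤ) ^ r₁) ∧
                 ((p:ℤ) ^ (r₂ + (e₁ + d)) ∣ (y₂:ℤ) - k * (p:ℤ) ^ r₂) := by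
    rw [AddSubgroup.mem_zmultiples_iff]
    apply exists_congr; intro k
    rw [Prod.ext_iff]
    have key : ∀ (n yy rr : ℕ), (k • ((p : ZMod (p^n))^rr) = (yy : ZMod (p^n))) ↔
        ((p:ℤ)^n ∣ (yy:ℤ) - k * (p:ℤ)^rr) := by
      intro n yy rr
      rw [zsmul_eq_mul,
        show ((k : ZMod (p^n)) * (p : ZMod (p^n))^rr) = (((k * (p:ℤ)^rr : ℤ)) : ZMod (p^n)) by
          push_cast; ring,
        show ((yy : ZMod (p^n)) = (((yy:ℤ)) : ZMod (p^n))) by push_cast; ring,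
        ZMod.intCast_eq_intCast_iff]
      rw [Int.modEq_iff_dvd, Nat.cast_pow]
    exact and_congr (key _ y₁ r₁) (key _ y₂ r₂)
  by_cases hq : p ^ r₁ ∣ y₁
  · obtain ⟨a, ha⟩ := hq
    have haZ : (y₁ : ℤ) = (p:ℤ) ^ r₁ * a := by exact_mod_cast ha
    have hQ1 : ζ ^ Q = 1 := (hone Q).mpr ⟨a, by rw [hQdef, ha, hN]; ring⟩
    -- T is the crucial quantity
    set T : ℕ := a * (p ^ r₂ * (p ^ e₁ - 1)) + y₂ with hTdef
    have hET : E = p ^ (r₁ + (e₁ + d)) * T := by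
      rw [hEdef, hTdef, ha]
      zify [hpe1]
      ring
    have hTZ : (T : ℤ) = (a:ℤ) * ((p:ℤ) ^ r₂ * ((p:ℤ) ^ e₁ - 1)) + y₂ := by
      rw [hTdef]
      push_cast [hpe1]
      ring
    have hS1 : (ζ ^ E) ^ (p ^ (e₁ + r₂)) = 1 := by
      rw [← pow_mul]
      exact (hone _).mpr ⟨T, by rw [hET, hN]; ring⟩
    rw [hQ1, geom_sum_root hS1]
    simp only [one_pow, Finset.sum_const, Finset.card_range, nsmul_eq_mul, mul_one]
    by_cases hs : p ^ (e₁ + r₂) ∣ T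
    · obtain ⟨m, hm⟩ := hs
      have hmZ : (a:ℤ) * ((p:ℤ) ^ r₂ * ((p:ℤ) ^ e₁ - 1)) + y₂ = (p:ℤ) ^ (e₁ + r₂) * m := by
        rw [← hTZ]; exact_mod_cast hm
      have hE1 : ζ ^ E = 1 :=
        (hone E).mpr ⟨m, by rw [hET, hm, hN]; ring⟩
      rw [if_pos, if_pos]
      · push_cast
        ring
      · rw [hmem]
        refine ⟨(a : ℤ) + (p:ℤ) ^ e₁ * ((m:ℤ) - a), ⟨(a:ℤ) - m, ?_⟩, ⟨0, ?_⟩⟩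
        · rw [haZ]; ring
        · linear_combination hmZ
      · exact hE1
    · have hE1 : ζ ^ E ≠ 1 := by
        intro hE1
        obtain ⟨w, hw⟩ := (hone E).mp hE1
        apply hs
        refine ⟨w, ?_⟩
        have : p ^ (r₁ + (e₁ + d)) * T = p ^ (r₁ + (e₁ + d)) * (p ^ (e₁ + r₂) * w) := by
          rw [← hET, hw, hN]; ring
        exact Nat.eq_of_mul_eq_mul_left (Nat.pow_pos hppos) this
      rw [if_neg hE1, if_neg, mul_zero]
      rw [hmem]
      rintro ⟨k, ⟨u, hu⟩, ⟨v, hv⟩⟩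
      apply hs
      have hkey : (T : ℤ) = (p:ℤ) ^ (e₁ + r₂) * ((a:ℤ) + (p:ℤ)^d * v - u) := by
        have hu' : (a : ℤ) - k = (p:ℤ) ^ e₁ * u := by
          have := hu
          rw [haZ] at this
          have hc : (p:ℤ) ^ (r₁ + e₁) = (p:ℤ)^r₁ * (p:ℤ)^e₁ := by ring
          have hr : (p:ℤ)^r₁ * ((a:ℤ) - k) = (p:ℤ)^r₁ * ((p:ℤ)^e₁ * u) := by
            linear_combination this
          exact mul_left_cancel₀ (pow_ne_zero _ (by exact_mod_cast hp0)) hr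
        rw [hTZ]
        linear_combination hv - (p:ℤ)^r₂ * hu'
      have : ((p:ℤ)) ^ (e₁ + r₂) ∣ (T : ℤ) := ⟨_, hkey⟩
      exact_mod_cast (by push_cast at this ⊢; exact_mod_cast this : ((p ^ (e₁+r₂) : ℕ) : ℤ) ∣ (T:ℤ))
  · -- q ≠ 1 : first geometric sum vanishes, and membership fails
    have hQpow : (ζ ^ Q) ^ (p ^ r₁) = 1 := by
      rw [← pow_mul]
      exact (hone _).mpr ⟨y₁, by rw [hQdef, hN]; ring⟩
    have hQne : ζ ^ Q ≠ 1 := by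
      intro hQ1
      obtain ⟨w, hw⟩ := (hone Q).mp hQ1
      apply hq
      refine ⟨w, ?_⟩
      have : p ^ (r₂ + (e₁ + d)) * (p ^ e₁ * y₁) =
          p ^ (r₂ + (e₁ + d)) * (p ^ e₁ * (p ^ r₁ * w)) := by
        rw [show p ^ (r₂ + (e₁ + d)) * (p ^ e₁ * y₁) = Q from by rw [hQdef]; ring, hw, hN]
        ring
      have := Nat.eq_of_mul_eq_mul_left (Nat.pow_pos hppos) this
      exact Nat.eq_of_mul_eq_mul_left (Nat.pow_pos hppos) this
    rw [geom_sum_root hQpow, if_neg hQne, zero_mul, if_neg]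
    rw [hmem]
    rintro ⟨k, ⟨u, hu⟩, -⟩
    apply hq
    have : ((p:ℤ)) ^ r₁ ∣ (y₁ : ℤ) := by
      refine ⟨k + (p:ℤ)^e₁ * u, ?_⟩
      linear_combination hu
    exact_mod_cast (by push_cast at this ⊢; exact_mod_cast this : ((p ^ r₁ : ℕ) : ℤ) ∣ (y₁:ℤ))
end
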